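/- Let A be an invertible Hermitian n×n complex matrix with real eigenvalues (λ_i) (all nonzero) and a corresponding orthonormal basis of eigenvectors (u_i) (as provided by the spectral theorem for Hermitian matrices), and let V be a Hermitian n×n complex matrix. Then the real-valued function t ↦ ‖A + t·V‖₁ is twice differentiable at t = 0, and its second derivative at 0 equals Σ_{i,j} (1 − sgn(λ_i)·sgn(λ_j)) · |⟨u_i, V·u_j⟩|² / (|λ_i| + |λ_j|), where ⟨u, w⟩ := Σ_k conj(u_k)·w_k. In particular this second derivative is zero when A is positive definite. -/

import Mathlib

open Matrix
open scoped ComplexOrder Matrix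

/-- The matrix absolute value `|X|`: the unique positive semidefinite square root of `Xᴴ * X`. -/
noncomputable def matAbs {n : Type*} [Fintype n] [DecidableEq n] (X : Matrix n n ℂ) :
    Matrix n n ℂ :=
  ((Matrix.posSemidef_conjTranspose_mul_self X).1.eigenvectorUnitary : Matrix n n ℂ) *
    diagonal ((↑) ∘ (√·) ∘ (Matrix.posSemidef_conjTranspose_mul_self X).1.eigenvalues) *
    (star (Matrix.posSemidef_conjTranspose_mul_self X).1.eigenvectorUnitary : Matrix n n ℂ)

/-- The trace norm `‖X‖₁ = trace |X|` (a real number). -/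
noncomputable def traceNorm {n : Type*} [Fintype n] [DecidableEq n] (X : Matrix n n ℂ) : ℝ :=
  ((matAbs X).trace).re

/-!
Conjugating by the unitary matrix with columns `u i` turns `A` into `D = diagonal lam` and
`V` into a Hermitian `W`. By the inverse function theorem, squaring has a smooth local inverse
`g` at `P = |D| = diagonal |lam|`, because its derivative `H ↦ P * H + H * P` is invertible; for
small `t` the matrix `g ((D + t W)²)` is Hermitian and close to `P`, hence positive definite, so it
is `|D + t W|`. Thus `‖D + t W‖₁ = re (trace X t)` with `X` smooth, and differentiating
`X t ^ 2 = (D + t W) ^ 2` twice gives Sylvester equations for `X' 0` and `X'' 0`. They are solved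
entrywise: `X' 0 i j = (lam i + lam j) / (|lam i| + |lam j|) * W i j`, and
`trace (X'' 0) = ∑ i, (W ^ 2 - X' 0 ^ 2) i i / |lam i|`; symmetrizing this sum in `i, j` gives the
formula.
-/

open Filter Topology

section Calculus

variable {E F : Type*} [NormedAddCommGroup E] [NormedSpace ℝ E] [NormedAddCommGroup F]
  [NormedSpace ℝ F]

lemma ContDiffAt.eventually_hasDerivAt_deriv {X : ℝ → E} {x : ℝ} (hX : ContDiffAt ℝ 2 X x) :
    ∀ᶠ t in 𝓝 x, HasDerivAt X (deriv X t) t :=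
  (hX.eventually (by simp)).mono fun _ ht => (ht.differentiableAt two_ne_zero).hasDerivAt

lemma ContDiffAt.hasDerivAt_deriv {X : ℝ → E} {x : ℝ} (hX : ContDiffAt ℝ 2 X x) :
    HasDerivAt (deriv X) (deriv (deriv X) x) x :=
  ((hX.derivWithin (m := 1) (by norm_num)).differentiableAt one_ne_zero).hasDerivAt

lemma ContDiffAt.hasDerivAt_deriv_of_eventuallyEq_comp {X : ℝ → E} {f : ℝ → F} {x : ℝ}
    (L : E →L[ℝ] F) (hX : ContDiffAt ℝ 2 X x) (hf : f =ᶠ[𝓝 x] fun t => L (X t)) :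
    (∀ᶠ t in 𝓝 x, DifferentiableAt ℝ f t) ∧ HasDerivAt (deriv f) (L (deriv (deriv X) x)) x := by
  have hLX : ∀ᶠ t in 𝓝 x, HasDerivAt (fun t => L (X t)) (L (deriv X t)) t :=
    hX.eventually_hasDerivAt_deriv.mono fun t ht => L.hasFDerivAt.comp_hasDerivAt t ht
  refine ⟨?_, ?_⟩
  · filter_upwards [hf.eventually_nhds, hLX] with t hft ht
    exact ht.differentiableAt.congr_of_eventuallyEq hft
  · have hderiv : deriv f =ᶠ[𝓝 x] fun t => L (deriv X t) :=
      hf.deriv.trans (hLX.mono fun _ ht => ht.deriv)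
    exact (L.hasFDerivAt.comp_hasDerivAt x hX.hasDerivAt_deriv).congr_of_eventuallyEq hderiv

lemma ContDiffAt.sylvester_equations_of_mul_self_eventuallyEq {A : Type*} [NormedRing A]
    [NormedAlgebra ℝ A] {X q q' : ℝ → A} {q'' : A} {x : ℝ} (hX : ContDiffAt ℝ 2 X x)
    (hq : ∀ᶠ t in 𝓝 x, HasDerivAt q (q' t) t) (hq' : HasDerivAt q' q'' x)
    (hXX : (fun t => X t * X t) =ᶠ[𝓝 x] q) :
    deriv X x * X x + X x * deriv X x = q' x ∧
      deriv (deriv X) x * X x + deriv X x * deriv X x +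
        (deriv X x * deriv X x + X x * deriv (deriv X) x) = q'' := by
  have hdiff := hX.eventually_hasDerivAt_deriv
  have h1 : (fun t => deriv X t * X t + X t * deriv X t) =ᶠ[𝓝 x] q' := by
    filter_upwards [hdiff, hq, hXX.eventually_nhds] with t ht hqt hXXt
    exact ((ht.mul ht).congr_of_eventuallyEq (EventuallyEq.symm hXXt)).unique hqt
  have hX' := hdiff.self_of_nhds
  have hY := hX.hasDerivAt_deriv
  exact ⟨h1.self_of_nhds,
    (((hY.mul hX').add (hX'.mul hY)).congr_of_eventuallyEq h1.symm).unique hq'⟩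

end Calculus

lemma inv_abs_add_inv_abs_mul_one_sub_sq (x y : ℝ) (hx : x ≠ 0) (hy : y ≠ 0) :
    (|x|⁻¹ + |y|⁻¹) * (1 - ((x + y) / (|x| + |y|)) ^ 2) =
      2 * ((1 - Real.sign x * Real.sign y) / (|x| + |y|)) := by
  have hxy : |x| + |y| ≠ 0 := by positivity
  rcases hx.lt_or_gt with hx | hx <;> rcases hy.lt_or_gt with hy | hy <;>
    simp only [Real.sign_of_neg, Real.sign_of_pos, abs_of_neg, abs_of_pos, hx, hy] at hxy ⊢ <;>
    field_simp <;> ring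

lemma Finset.sum_sum_eq_of_add_swap {ι M : Type*} [Fintype ι] [AddCommMonoid M]
    [IsAddTorsionFree M] {f g : ι → ι → M} (h : ∀ i j, f i j + f j i = g i j + g j i) :
    ∑ i, ∑ j, f i j = ∑ i, ∑ j, g i j := by
  have hswap (k : ι → ι → M) : ∑ i, ∑ j, (k i j + k j i) = 2 • ∑ i, ∑ j, k i j := by
    simp only [Finset.sum_add_distrib, two_smul]
    rw [Finset.sum_comm (f := fun i j => k j i)]
  have := hswap f
  rw [Finset.sum_congr rfl fun i _ => Finset.sum_congr rfl fun j _ => h i j, hswap g] at this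
  exact (nsmul_right_inj two_ne_zero).mp this.symm

namespace Matrix

lemma PosDef.eventually_posDef_of_isHermitian {n 𝕜 : Type*} [Fintype n] [RCLike 𝕜]
    {P : Matrix n n 𝕜} (hP : P.PosDef) : ∀ᶠ H in 𝓝 P, H.IsHermitian → H.PosDef := by
  let F : Matrix n n 𝕜 × (n → 𝕜) → ℝ := fun p => RCLike.re (star p.2 ⬝ᵥ p.1 *ᵥ p.2)
  have hF : Continuous F := RCLike.continuous_re.comp
    ((continuous_snd.star).dotProduct (continuous_fst.matrix_mulVec continuous_snd))
  have hsphere : ∀ᶠ H in 𝓝 P, ∀ x ∈ Metric.sphere (0 : n → 𝕜) 1, 0 < F (H, x) := by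
    refine (isCompact_sphere 0 1).eventually_forall_of_forall_eventually fun x hx => ?_
    refine continuousAt_const.eventually_lt hF.continuousAt ?_
    have hx0 : x ≠ 0 := ne_zero_of_mem_unit_sphere ⟨x, hx⟩
    exact (RCLike.pos_iff.mp (hP.dotProduct_mulVec_pos hx0)).1
  filter_upwards [hsphere] with H hH hHerm
  refine PosDef.of_dotProduct_mulVec_pos hHerm fun x hx => ?_
  have hnx : 0 < ‖x‖ := norm_pos_iff.mpr hx
  have hy : ‖x‖⁻¹ • x ∈ Metric.sphere (0 : n → 𝕜) 1 := by
    simp [norm_smul, hnx.ne']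
  have hpos := hH _ hy
  simp only [F, star_smul, star_trivial, mulVec_smul, dotProduct_smul, smul_dotProduct,
    RCLike.smul_re] at hpos
  have hinv : 0 ≤ ‖x‖⁻¹ := inv_nonneg.mpr hnx.le
  exact RCLike.pos_iff.mpr ⟨pos_of_mul_pos_right (pos_of_mul_pos_right hpos hinv) hinv,
    hHerm.im_star_dotProduct_mulVec_self x⟩

lemma star_dotProduct_mulVec_eq_apply {n : Type*} [Fintype n] (u : n → n → ℂ)
    (B : Matrix n n ℂ) (i j : n) :
    star (u i) ⬝ᵥ (B *ᵥ u j) = ((of u)ᵀᴴ * B * (of u)ᵀ) i j := by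
  rw [Matrix.mul_assoc]
  simp [mul_apply, dotProduct, mulVec, conjTranspose_apply]

variable {n : Type*} [Fintype n] [DecidableEq n]

section matAbs

open scoped MatrixOrder

lemma matAbs_eq_cfcSqrt (X : Matrix n n ℂ) : matAbs X = CFC.sqrt (Xᴴ * X) := by
  have hX := posSemidef_conjTranspose_mul_self X
  rw [CFC.sqrt_eq_cfc, cfc_nnreal_eq_real _ _ hX.nonneg, hX.1.cfc_eq]
  simp only [IsHermitian.cfc, matAbs]
  congr 3
  ext i
  simp [max_eq_left (hX.eigenvalues_nonneg i)]

lemma matAbs_mul_self (X : Matrix n n ℂ) : matAbs X * matAbs X = Xᴴ * X := by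
  rw [matAbs_eq_cfcSqrt]
  exact CFC.sqrt_mul_sqrt_self _ (posSemidef_conjTranspose_mul_self X).nonneg

lemma matAbs_eq_of_posSemidef {X S : Matrix n n ℂ} (hS : S.PosSemidef) (h : S * S = Xᴴ * X) :
    matAbs X = S := by
  rw [matAbs_eq_cfcSqrt]
  exact CFC.sqrt_unique h hS.nonneg

lemma matAbs_posSemidef (X : Matrix n n ℂ) : (matAbs X).PosSemidef := by
  rw [matAbs_eq_cfcSqrt]
  exact (CFC.sqrt_nonneg _).posSemidef

end matAbs

lemma matAbs_diagonal (d : n → ℝ) :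
    matAbs (diagonal fun i => (d i : ℂ)) = diagonal fun i => ((|d i| : ℝ) : ℂ) := by
  refine matAbs_eq_of_posSemidef (posSemidef_diagonal_iff.mpr fun i => by simp) ?_
  simp only [diagonal_conjTranspose, diagonal_mul_diagonal]
  congr 1
  ext i
  simp [← Complex.ofReal_mul]

lemma matAbs_unitary_conj {U : Matrix n n ℂ} (hU : Uᴴ * U = 1) (X : Matrix n n ℂ) :
    matAbs (Uᴴ * X * U) = Uᴴ * matAbs X * U := by
  have hU' : U * Uᴴ = 1 := mul_eq_one_comm.mp hU
  have hconj (M N : Matrix n n ℂ) : Uᴴ * M * U * (Uᴴ * N * U) = Uᴴ * (M * N) * U := by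
    simp only [Matrix.mul_assoc, ← Matrix.mul_assoc U Uᴴ, hU', Matrix.one_mul]
  refine matAbs_eq_of_posSemidef ((matAbs_posSemidef X).conjTranspose_mul_mul_same U) ?_
  rw [conjTranspose_mul, conjTranspose_mul, conjTranspose_conjTranspose,
    ← Matrix.mul_assoc Uᴴ Xᴴ U, hconj, hconj, matAbs_mul_self]

lemma traceNorm_unitary_conj {U : Matrix n n ℂ} (hU : Uᴴ * U = 1) (X : Matrix n n ℂ) :
    traceNorm (Uᴴ * X * U) = traceNorm X := by
  rw [traceNorm, matAbs_unitary_conj hU, trace_mul_cycle, mul_eq_one_comm.mp hU, Matrix.one_mul,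
    traceNorm]

lemma diagonal_mul_add_mul_diagonal_apply {R : Type*} [CommSemiring R] (d : n → R)
    (H : Matrix n n R) (i j : n) :
    (diagonal d * H + H * diagonal d) i j = (d i + d j) * H i j := by
  simp only [add_apply, diagonal_mul, mul_diagonal]
  ring

section Sylvester

open scoped Matrix.Norms.Frobenius

lemma injective_mulLeft_add_mulRight_diagonal {a : n → ℝ} (ha : ∀ i, 0 < a i) :
    Function.Injective (LinearMap.mulLeft ℝ (diagonal fun i => (a i : ℂ)) +
      LinearMap.mulRight ℝ (diagonal fun i => (a i : ℂ))) := by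
  refine (injective_iff_map_eq_zero _).mpr fun H hH => ?_
  ext i j
  have hij := congrFun₂ hH i j
  simp only [LinearMap.add_apply, LinearMap.mulLeft_apply, LinearMap.mulRight_apply,
    diagonal_mul_add_mul_diagonal_apply, zero_apply] at hij
  have : (a i : ℂ) + a j ≠ 0 := by exact_mod_cast (add_pos (ha i) (ha j)).ne'
  simpa [this] using hij

noncomputable def sylvesterEquiv (a : n → ℝ) (ha : ∀ i, 0 < a i) :
    Matrix n n ℂ ≃L[ℝ] Matrix n n ℂ :=
  (LinearEquiv.ofInjectiveEndo (LinearMap.mulLeft ℝ (diagonal fun i => (a i : ℂ)) +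
    LinearMap.mulRight ℝ (diagonal fun i => (a i : ℂ)))
    (injective_mulLeft_add_mulRight_diagonal ha)).toContinuousLinearEquiv

lemma hasFDerivAt_mul_self_diagonal {a : n → ℝ} (ha : ∀ i, 0 < a i) :
    HasFDerivAt (fun X : Matrix n n ℂ => X * X) (sylvesterEquiv a ha : Matrix n n ℂ →L[ℝ] _)
      (diagonal fun i => (a i : ℂ)) :=
  ((hasFDerivAt_id _).mul' (hasFDerivAt_id _)).congr_fderiv (by ext H : 1; rfl)

theorem exists_contDiffAt_matAbs_eq {a : n → ℝ} (ha : ∀ i, 0 < a i) :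
    ∃ g : Matrix n n ℂ → Matrix n n ℂ,
      ContDiffAt ℝ 2 g (diagonal (fun i => (a i : ℂ)) * diagonal fun i => (a i : ℂ)) ∧
      ∀ᶠ S in 𝓝 (diagonal (fun i => (a i : ℂ)) * diagonal fun i => (a i : ℂ)),
        ∀ X : Matrix n n ℂ, Xᴴ * X = S → matAbs X = g S := by
  set P : Matrix n n ℂ := diagonal fun i => (a i : ℂ)
  have hsq : ContDiffAt ℝ 2 (fun X : Matrix n n ℂ => X * X) P :=
    (contDiff_id.mul contDiff_id).contDiffAt
  have hstrict := hsq.hasStrictFDerivAt' (hasFDerivAt_mul_self_diagonal ha) two_ne_zero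
  set g := hstrict.localInverse
  refine ⟨g, hsq.to_localInverse (hasFDerivAt_mul_self_diagonal ha) two_ne_zero, ?_⟩
  have hPh : Pᴴ = P := by simp [P, diagonal_conjTranspose]
  have hP : P.PosDef := posDef_diagonal_iff.mpr fun i => by simpa using ha i
  have hg : Tendsto g (𝓝 (P * P)) (𝓝 P) := by
    have := hstrict.localInverse_continuousAt.tendsto
    rwa [hstrict.localInverse_apply_image] at this
  have hgH : Tendsto (fun S => (g S)ᴴ) (𝓝 (P * P)) (𝓝 P) := by
    simpa [hPh, Function.comp_def] using (continuous_id.matrix_conjTranspose.tendsto P).comp hg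
  filter_upwards [hstrict.eventually_right_inverse, hg.eventually hstrict.eventually_left_inverse,
    hgH.eventually hstrict.eventually_left_inverse,
    hg.eventually hP.eventually_posDef_of_isHermitian] with S hsqrt hleft hleftH hpos X hXS
  -- `(g S)ᴴ` is a square root of `S` close to `P` as well, so the local inverse returns it.
  have hHerm : (g S).IsHermitian := by
    have : (g S)ᴴ * (g S)ᴴ = g S * g S := by
      rw [← conjTranspose_mul, hsqrt, ← hXS, conjTranspose_mul, conjTranspose_conjTranspose]
    exact (hleftH.symm.trans (congrArg g this)).trans hleft
  exact matAbs_eq_of_posSemidef (hpos hHerm).posSemidef (hsqrt.trans hXS.symm)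

end Sylvester

lemma re_trace_eq_sum_of_sylvester {lam : n → ℝ} (hlam : ∀ i, lam i ≠ 0)
    {W Y Z : Matrix n n ℂ} (hW : W.IsHermitian)
    (hY : Y * diagonal (fun i => ((|lam i| : ℝ) : ℂ)) + diagonal (fun i => ((|lam i| : ℝ) : ℂ)) * Y
      = W * diagonal (fun i => (lam i : ℂ)) + diagonal (fun i => (lam i : ℂ)) * W)
    (hZ : Z * diagonal (fun i => ((|lam i| : ℝ) : ℂ)) + Y * Y +
        (Y * Y + diagonal (fun i => ((|lam i| : ℝ) : ℂ)) * Z) = W * W + W * W) :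
    (trace Z).re = ∑ i, ∑ j, (1 - Real.sign (lam i) * Real.sign (lam j)) *
      Complex.normSq (W i j) / (|lam i| + |lam j|) := by
  set r : n → n → ℝ := fun i j => (lam i + lam j) / (|lam i| + |lam j|)
  have hpos (i j : n) : ((|lam i| + |lam j| : ℝ) : ℂ) ≠ 0 := by
    exact_mod_cast (add_pos (abs_pos.mpr (hlam i)) (abs_pos.mpr (hlam j))).ne'
  have hWswap (i j : n) : W j i = star (W i j) := (hW.apply j i).symm
  have hY_apply (i j : n) : Y i j = r i j * W i j := by
    have h := congrFun₂ hY i j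
    rw [add_comm (Y * _), add_comm (W * _), diagonal_mul_add_mul_diagonal_apply,
      diagonal_mul_add_mul_diagonal_apply] at h
    simp only [r, Complex.ofReal_div, Complex.ofReal_add]
    push_cast at hpos h
    field_simp [hpos i j]
    linear_combination h
  have hWW (i : n) : (W * W) i i = ((∑ j, Complex.normSq (W i j) : ℝ) : ℂ) := by
    simp only [mul_apply, hWswap i, Complex.star_def, Complex.mul_conj, Complex.ofReal_sum]
  have hYY (i : n) : (Y * Y) i i = ((∑ j, r i j ^ 2 * Complex.normSq (W i j) : ℝ) : ℂ) := by
    simp only [mul_apply, hY_apply, hWswap i, Complex.star_def, Complex.ofReal_sum]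
    refine Finset.sum_congr rfl fun j _ => ?_
    rw [show r j i = r i j by simp only [r, add_comm]]
    push_cast
    rw [← Complex.mul_conj]
    ring
  have hZ_apply (i : n) :
      (Z i i).re = ∑ j, |lam i|⁻¹ * ((1 - r i j ^ 2) * Complex.normSq (W i j)) := by
    have h := congrFun₂ hZ i i
    simp only [add_apply, mul_diagonal, diagonal_mul, hWW, hYY] at h
    have hi : (|lam i| : ℝ) ≠ 0 := abs_ne_zero.mpr (hlam i)
    have : Z i i = (((∑ j, Complex.normSq (W i j)) - ∑ j, r i j ^ 2 * Complex.normSq (W i j)) /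
        |lam i| : ℝ) := by
      push_cast at h ⊢
      field_simp
      linear_combination h / 2
    rw [this, Complex.ofReal_re, ← Finset.sum_sub_distrib, div_eq_inv_mul, Finset.mul_sum]
    simp only [sub_mul, one_mul]
  rw [trace, Complex.re_sum]
  simp only [diag_apply]
  rw [Finset.sum_congr rfl fun i _ => hZ_apply i]
  refine Finset.sum_sum_eq_of_add_swap fun i j => ?_
  have hrswap : r j i = r i j := by simp only [r, add_comm]
  have hνswap : Complex.normSq (W j i) = Complex.normSq (W i j) := by
    rw [hWswap, Complex.star_def, Complex.normSq_conj]
  rw [hrswap, hνswap, ← add_mul, ← mul_assoc,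
    inv_abs_add_inv_abs_mul_one_sub_sq _ _ (hlam i) (hlam j), mul_comm (Real.sign (lam j)),
    add_comm |lam j|]
  ring

section Frobenius

open scoped Norms.Frobenius

theorem hasDerivAt_deriv_traceNorm_diagonal_add_smul {lam : n → ℝ} (hlam : ∀ i, lam i ≠ 0)
    {W : Matrix n n ℂ} (hW : W.IsHermitian) :
    (∀ᶠ t in 𝓝 0, DifferentiableAt ℝ
        (fun t : ℝ => traceNorm (diagonal (fun i => (lam i : ℂ)) + (t : ℂ) • W)) t) ∧
      HasDerivAt (deriv fun t : ℝ => traceNorm (diagonal (fun i => (lam i : ℂ)) + (t : ℂ) • W))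
        (∑ i, ∑ j, (1 - Real.sign (lam i) * Real.sign (lam j)) *
          Complex.normSq (W i j) / (|lam i| + |lam j|)) 0 := by
  simp only [Complex.coe_smul]
  set D : Matrix n n ℂ := diagonal fun i => (lam i : ℂ)
  set P : Matrix n n ℂ := diagonal fun i => ((|lam i| : ℝ) : ℂ)
  set M : ℝ → Matrix n n ℂ := fun t => D + t • W
  have hMh (t : ℝ) : (M t)ᴴ = M t := by
    simp [M, D, conjTranspose_add, conjTranspose_smul, hW.eq, diagonal_conjTranspose]
  have hM (t : ℝ) : HasDerivAt M W t :=
    (((hasDerivAt_id t).smul_const W).const_add D).congr_deriv (one_smul ℝ W)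
  have hM0 : (M 0)ᴴ * M 0 = P * P := by
    simp [M, D, P, diagonal_mul_diagonal, ← Complex.ofReal_mul]
  obtain ⟨g, hg, habs⟩ := exists_contDiffAt_matAbs_eq fun i => abs_pos.mpr (hlam i)
  have hMM : ContDiff ℝ 2 fun t => (M t)ᴴ * M t := by
    simp only [hMh]
    exact (contDiff_const.add (contDiff_id.smul contDiff_const)).mul
      (contDiff_const.add (contDiff_id.smul contDiff_const))
  set X := fun t => g ((M t)ᴴ * M t)
  have hX : ContDiffAt ℝ 2 X 0 := (hM0 ▸ hg).comp 0 hMM.contDiffAt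
  have hXabs : ∀ᶠ t in 𝓝 0, matAbs (M t) = X t :=
    ((hM0 ▸ hMM.continuous.tendsto 0).eventually habs).mono fun t ht => ht _ rfl
  have hX0 : X 0 = P := by
    rw [← hXabs.self_of_nhds]
    simp [M, D, P, matAbs_diagonal]
  have hXX : (fun t => X t * X t) =ᶠ[𝓝 0] fun t => M t * M t := by
    filter_upwards [hXabs] with t ht
    rw [← ht, matAbs_mul_self, hMh]
  obtain ⟨hY, hZ⟩ := hX.sylvester_equations_of_mul_self_eventuallyEq
    (q' := fun t => W * M t + M t * W)
    (Eventually.of_forall fun t => (hM t).mul (hM t))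
    (((hM 0).const_mul W).add ((hM 0).mul_const W)) hXX
  let τ : Matrix n n ℂ →L[ℝ] ℝ :=
    Complex.reCLM.comp (traceLinearMap n ℝ ℂ).toContinuousLinearMap
  obtain ⟨hdiff, hderiv⟩ := hX.hasDerivAt_deriv_of_eventuallyEq_comp τ
    (f := fun t => traceNorm (M t)) (hXabs.mono fun _ ht => congrArg (fun S => (trace S).re) ht)
  refine ⟨hdiff, ?_⟩
  rw [hX0] at hY hZ
  rw [← re_trace_eq_sum_of_sylvester hlam hW (by simpa [M] using hY) hZ]
  exact hderiv

end Frobenius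

end Matrix

open Matrix

theorem traceNorm_second_deriv_general {n : Type*} [Fintype n] [DecidableEq n]
    (A V : Matrix n n ℂ) (hV : V.IsHermitian)
    (lam : n → ℝ) (u : n → n → ℂ)
    (hlam : ∀ i, lam i ≠ 0)
    (hortho : ∀ i j, star (u i) ⬝ᵥ u j = if i = j then 1 else 0)
    (heig : ∀ i, A *ᵥ u i = (lam i : ℂ) • u i) :
    (∀ᶠ t in nhds (0 : ℝ),
        DifferentiableAt ℝ (fun t : ℝ => traceNorm (A + (t : ℂ) • V)) t) ∧
      HasDerivAt (deriv (fun t : ℝ => traceNorm (A + (t : ℂ) • V)))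
        (∑ i, ∑ j,
          (1 - Real.sign (lam i) * Real.sign (lam j)) *
            Complex.normSq (star (u i) ⬝ᵥ (V *ᵥ u j)) / (|lam i| + |lam j|)) 0 ∧
      (A.PosDef →
        (∑ i, ∑ j,
          (1 - Real.sign (lam i) * Real.sign (lam j)) *
            Complex.normSq (star (u i) ⬝ᵥ (V *ᵥ u j)) / (|lam i| + |lam j|)) = 0) := by
  set U := (of u)ᵀ
  have hU : Uᴴ * U = 1 := by
    ext i j
    rw [← Matrix.mul_one Uᴴ, ← star_dotProduct_mulVec_eq_apply, one_mulVec, hortho, one_apply]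
  have hAU : Uᴴ * A * U = diagonal fun i => (lam i : ℂ) := by
    ext i j
    rw [← star_dotProduct_mulVec_eq_apply, heig, dotProduct_smul, hortho, diagonal_apply]
    split_ifs with h <;> simp [h]
  have hf : (fun t : ℝ => traceNorm (A + (t : ℂ) • V)) =
      fun t : ℝ => traceNorm (diagonal (fun i => (lam i : ℂ)) + (t : ℂ) • (Uᴴ * V * U)) := by
    funext t
    rw [← hAU, ← traceNorm_unitary_conj hU, Matrix.mul_add, Matrix.add_mul, mul_smul_comm,
      smul_mul_assoc]
  obtain ⟨hdiff, hderiv⟩ :=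
    hasDerivAt_deriv_traceNorm_diagonal_add_smul hlam (isHermitian_conjTranspose_mul_mul U hV)
  simp_rw [hf, star_dotProduct_mulVec_eq_apply u V]
  refine ⟨hdiff, hderiv, fun hA => Finset.sum_eq_zero fun i _ => Finset.sum_eq_zero fun j _ => ?_⟩
  have hpos (k : n) : 0 < lam k := by
    have hu : u k ≠ 0 := fun h => by simpa [h] using hortho k k
    have := hA.dotProduct_mulVec_pos hu
    rwa [heig, dotProduct_smul, hortho, if_pos rfl, smul_eq_mul, mul_one,
      Complex.zero_lt_real] at this
  simp [Real.sign_of_pos (hpos i), Real.sign_of_pos (hpos j)]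

/-- **Second derivative (Hessian) of the trace norm at an invertible Hermitian matrix.**
Let `A` be an invertible Hermitian matrix with nonzero real eigenvalues `lam i` and an
orthonormal eigenbasis `u i`, and let `V` be Hermitian. Then `t ↦ ‖A + t·V‖₁` is twice
differentiable at `0` with second derivative
`Σ_{i,j} (1 − sgn(lam i)·sgn(lam j))·|⟨u i, V·u j⟩|²/(|lam i| + |lam j|)`;
in particular it vanishes when `A` is positive definite. -/
theorem traceNorm_second_deriv {n : Type*} [Fintype n] [DecidableEq n] [Nonempty n]
    (A V : Matrix n n ℂ) (hA : A.IsHermitian) (hV : V.IsHermitian) (hinv : IsUnit A)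
    (lam : n → ℝ) (u : n → n → ℂ)
    (hlam : ∀ i, lam i ≠ 0)
    (hortho : ∀ i j, star (u i) ⬝ᵥ u j = if i = j then 1 else 0)
    (heig : ∀ i, A *ᵥ u i = (lam i : ℂ) • u i) :
    (∀ᶠ t in nhds (0 : ℝ),
        DifferentiableAt ℝ (fun t : ℝ => traceNorm (A + (t : ℂ) • V)) t) ∧
      HasDerivAt (deriv (fun t : ℝ => traceNorm (A + (t : ℂ) • V)))
        (∑ i, ∑ j,
          (1 - Real.sign (lam i) * Real.sign (lam j)) *
            Complex.normSq (star (u i) ⬝ᵥ (V *ᵥ u j)) / (|lam i| + |lam j|)) 0 ∧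
      (A.PosDef →
        (∑ i, ∑ j,
          (1 - Real.sign (lam i) * Real.sign (lam j)) *
            Complex.normSq (star (u i) ⬝ᵥ (V *ᵥ u j)) / (|lam i| + |lam j|)) = 0) :=
  traceNorm_second_deriv_general A V hV lam u hlam hortho heig
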